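/- arXiv:2410.13990 — 6 statements merged into one kernel-verified Lean document; each statement's English description precedes it below -/
import Mathlib

section
/- Fix integers k ≥ 1 and m > 3. The number of integers x with 0 ≤ x < 3^k such that S_{2,3}(x) = m equals Σ_{j=0}^{⌊m/4⌋} C(k, j) · C(k − j, m − 4j), where C denotes the binomial coefficient (with C(a, c) = 0 when c > a, and k − j interpreted as 0 when j > k). Here the index j counts the base-3 digits equal to 2 and m − 4j counts the digits equal to 1. -/
/-- The `e`-power base-`b` happy function: the sum of the `e`-th powers of the
base-`b` digits of `n`. -/
def S (e b n : ℕ) : ℕ := ((Nat.digits b n).map (· ^ e)).sum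

/-
Summing `X ^ S(x)` over all `x < 3 ^ k` gives the generating polynomial `(1 + X + X ^ 4) ^ k`, since
each of the `k` digits contributes `X ^ (d ^ 2)` independently. The count in question is the
coefficient of `X ^ m`; writing `(1 + X + X ^ 4) ^ k = ∑ⱼ C(k, j) X ^ (4j) (1 + X) ^ (k - j)` reads it off.
-/

open Finset Polynomial

theorem S_add_mul {e b : ℕ} (he : e ≠ 0) (hb : 1 < b) {d : ℕ} (hd : d < b) (q : ℕ) :
    S e b (d + b * q) = d ^ e + S e b q := by
  by_cases hdq : d ≠ 0 ∨ q ≠ 0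
  · simp [S, Nat.digits_add b hb d q hd hdq]
  · obtain ⟨rfl, rfl⟩ : d = 0 ∧ q = 0 := by tauto
    simp [S, he]

theorem Finset.sum_range_mul_eq_sum_sum {M : Type*} [AddCommMonoid M] (f : ℕ → M) (n b : ℕ) :
    ∑ x ∈ range (n * b), f x = ∑ q ∈ range n, ∑ d ∈ range b, f (d + b * q) := by
  induction n with
  | zero => simp
  | succ n ih =>
    rw [Nat.succ_mul, sum_range_add, ih, sum_range_succ]
    simp only [add_comm, mul_comm b n]

theorem sum_range_pow_X_pow_S {e b : ℕ} (he : e ≠ 0) (hb : 1 < b) (k : ℕ) :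
    ∑ x ∈ range (b ^ k), (X : ℕ[X]) ^ S e b x = (∑ d ∈ range b, X ^ d ^ e) ^ k := by
  induction k with
  | zero => simp [S]
  | succ k ih =>
    rw [pow_succ, sum_range_mul_eq_sum_sum, pow_succ, ← ih, sum_mul_sum]
    refine sum_congr rfl fun q _ => sum_congr rfl fun d hd => ?_
    rw [S_add_mul he hb (mem_range.mp hd), pow_add, mul_comm]

theorem card_filter_eq_coeff_sum_X_pow {α : Type*} (s : Finset α) (f : α → ℕ) (m : ℕ) :
    #{x ∈ s | f x = m} = (∑ x ∈ s, (X : ℕ[X]) ^ f x).coeff m := by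
  simp only [card_filter, finsetSum_coeff, coeff_X_pow, eq_comm]

theorem coeff_one_add_X_add_X_pow_pow {a : ℕ} (ha : 0 < a) (k m : ℕ) :
    ((1 + X + X ^ a : ℕ[X]) ^ k).coeff m =
      ∑ j ∈ range (m / a + 1), k.choose j * (k - j).choose (m - a * j) := by
  have hexpand : (1 + X + X ^ a : ℕ[X]) ^ k =
      ∑ j ∈ range (k + 1), X ^ (a * j) * (1 + X) ^ (k - j) * (k.choose j : ℕ[X]) := by
    simp_rw [pow_mul, ← add_pow]
    ring
  have hcoeff (j : ℕ) : (X ^ (a * j) * (1 + X) ^ (k - j) * (k.choose j : ℕ[X])).coeff m =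
      if a * j ≤ m then k.choose j * (k - j).choose (m - a * j) else 0 := by
    rw [coeff_mul_natCast, coeff_X_pow_mul', coeff_one_add_X_pow]
    split_ifs <;> simp [mul_comm]
  rw [hexpand, finsetSum_coeff]
  simp_rw [hcoeff]
  rw [← sum_filter]
  refine sum_subset (fun j hj => ?_) (fun j hj hjk => ?_)
  · simp only [mem_filter, mem_range] at hj ⊢
    exact Nat.lt_succ_of_le ((Nat.le_div_iff_mul_le ha).mpr (by linarith [hj.2]))
  · simp only [mem_filter, mem_range, not_and, not_le] at hj hjk
    have hjm : a * j ≤ m := by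
      have := (Nat.le_div_iff_mul_le ha).mp (Nat.le_of_lt_succ hj)
      linarith
    have hkj : k < j := by
      by_contra! hjk'
      exact (hjk (by omega)).not_ge hjm
    rw [Nat.choose_eq_zero_of_lt hkj, zero_mul]

theorem stmt_4_general (k m : ℕ) :
    ((Finset.range (3 ^ k)).filter (fun x => S 2 3 x = m)).card =
      ∑ j ∈ Finset.range (m / 4 + 1), Nat.choose k j * Nat.choose (k - j) (m - 4 * j) := by
  rw [card_filter_eq_coeff_sum_X_pow, sum_range_pow_X_pow_S two_ne_zero (by norm_num),
    ← coeff_one_add_X_add_X_pow_pow (by norm_num)]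
  simp [sum_range_succ]

theorem stmt_4 (k m : ℕ) (hk : 1 ≤ k) (hm : 3 < m) :
    ((Finset.range (3 ^ k)).filter (fun x => S 2 3 x = m)).card =
      ∑ j ∈ Finset.range (m / 4 + 1), Nat.choose k j * Nat.choose (k - j) (m - 4 * j) :=
  stmt_4_general k m
end

section
/- Fix integers b ≥ 2, e ≥ 2, k ≥ 1, and m ≥ 1. The number of integers x with 0 ≤ x < b^k such that S_{e,b}(x) = m equals the sum, over all tuples (j_2, j_3, …, j_{b−1}) of nonnegative integers satisfying Σ_{i=2}^{b−1} j_i · i^e ≤ m, of the product [Π_{i=2}^{b−1} C(k − t_i, j_i)] · C(k − t_1, m − s_1), where for 1 ≤ i ≤ b−1 we set t_i = Σ_{x=i+1}^{b−1} j_x and s_1 = Σ_{x=2}^{b−1} j_x · x^e, C denotes the binomial coefficient (with C(a, c) = 0 when c > a, and natural subtraction k − t_i interpreted as 0 when t_i > k). Here j_i is the number of base-b digits equal to i, and m − s_1 is the forced number of digits equal to 1; only finitely many tuples give a nonzero term, so the sum is well defined. -/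
/-- Extend a tuple `(j_2, …, j_{b-1})`, given as a dependent function on the
index set `Finset.Icc 2 (b-1)`, to a plain function `ℕ → ℕ` vanishing elsewhere. -/
def extendTuple (b : ℕ) (f : (i : ℕ) → i ∈ Finset.Icc 2 (b - 1) → ℕ) : ℕ → ℕ :=
  fun i => if h : i ∈ Finset.Icc 2 (b - 1) then f i h else 0

/-!
Pad a number `x < b ^ k` with leading zeros to a vector of exactly `k` base-`b` digits; since
`0 ^ e = 0`, `S e b x` is the sum of the `e`-th powers of these digits, i.e. `∑ i, j_i * i ^ e`
where `j_i` counts the digits equal to `i`. Sorting the digit vectors with `S e b x = m` by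
`(j_2, …, j_{b-1})`, each fibre consists of the vectors with prescribed counts `j_2, …, j_{b-1}`
and `j_1 = m - s_1`. Their number is the multinomial coefficient, obtained as a product of
binomials by choosing the positions of the digits `b - 1, b - 2, …, 1` in turn among the
positions still free.
-/

open Finset

section Digits

variable {b e k : ℕ}

lemma S_eq_pow_mod_add (hb : 1 < b) (he : e ≠ 0) (x : ℕ) :
    S e b x = (x % b) ^ e + S e b (x / b) := by
  rcases x.eq_zero_or_pos with rfl | hx
  · simp [S, he]
  · simp [S, Nat.digits_def' hb hx]

lemma S_eq_sum_pow_digit (hb : 1 < b) (he : e ≠ 0) {x : ℕ} (hx : x < b ^ k) :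
    S e b x = ∑ p : Fin k, (x / b ^ (p : ℕ) % b) ^ e := by
  induction k generalizing x with
  | zero => simp_all [S]
  | succ k ih =>
    rw [S_eq_pow_mod_add hb he, ih (Nat.div_lt_of_lt_mul (by rwa [← pow_succ'])),
      Fin.sum_univ_succ]
    simp [Nat.div_div_eq_div_mul, pow_succ']

lemma sum_digit_mul_pow {x : ℕ} (hx : x < b ^ k) :
    ∑ p : Fin k, x / b ^ (p : ℕ) % b * b ^ (p : ℕ) = x := by
  simpa [finFunctionFinEquiv_symm_apply_val] using
    (finFunctionFinEquiv_apply (finFunctionFinEquiv.symm ⟨x, hx⟩)).symm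

lemma sum_mul_pow_lt {d : Fin k → ℕ} (hd : ∀ p, d p < b) : ∑ p, d p * b ^ (p : ℕ) < b ^ k :=
  (finFunctionFinEquiv fun p => (⟨d p, hd p⟩ : Fin b)).isLt

lemma sum_mul_pow_div_pow_mod {d : Fin k → ℕ} (hd : ∀ p, d p < b) (p : Fin k) :
    (∑ q, d q * b ^ (q : ℕ)) / b ^ (p : ℕ) % b = d p := by
  have := finFunctionFinEquiv_symm_apply_val (finFunctionFinEquiv fun p => (⟨d p, hd p⟩ : Fin b)) p
  rw [Equiv.symm_apply_apply] at this
  exact this.symm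

lemma card_filter_S_eq (hb : 1 < b) (he : e ≠ 0) (m : ℕ) :
    #{x ∈ range (b ^ k) | S e b x = m} =
      #{d ∈ Fintype.piFinset fun _ : Fin k => range b | ∑ p, d p ^ e = m} := by
  apply card_nbij' (fun x (p : Fin k) => x / b ^ (p : ℕ) % b) (fun d => ∑ p, d p * b ^ (p : ℕ))
  · intro x hx
    simp only [coe_filter, mem_range, Set.mem_ofPred_eq, Fintype.mem_piFinset] at hx ⊢
    exact ⟨fun p => Nat.mod_lt _ (by omega), by rw [← S_eq_sum_pow_digit hb he hx.1, hx.2]⟩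
  · intro d hd
    simp only [coe_filter, mem_range, Set.mem_ofPred_eq, Fintype.mem_piFinset] at hd ⊢
    refine ⟨sum_mul_pow_lt hd.1, ?_⟩
    rw [S_eq_sum_pow_digit hb he (sum_mul_pow_lt hd.1)]
    simp only [sum_mul_pow_div_pow_mod hd.1, hd.2]
  · intro x hx
    exact sum_digit_mul_pow (mem_range.1 (mem_filter.1 hx).1)
  · intro d hd
    simp only [coe_filter, Set.mem_ofPred_eq, Fintype.mem_piFinset, mem_range] at hd
    exact funext (sum_mul_pow_div_pow_mod hd.1)

end Digits

section ValueCount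

variable {α : Type*} [Fintype α] {b e m : ℕ}

def valueCount (d : α → ℕ) (i : ℕ) : ℕ := #{p | d p = i}

lemma sum_comp_eq_sum_valueCount_mul {d : α → ℕ} {t : Finset ℕ} (hd : ∀ p, d p ∈ t)
    (f : ℕ → ℕ) : ∑ p, f (d p) = ∑ i ∈ t, valueCount d i * f i := by
  rw [← sum_fiberwise_of_maps_to (g := d) (fun p _ => hd p)]
  exact sum_congr rfl fun i _ => sum_const_nat fun p hp => by rw [(mem_filter.1 hp).2]

lemma sum_pow_eq_valueCount_one_add (he : e ≠ 0) {d : α → ℕ} (hd : ∀ p, d p < b) :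
    ∑ p, d p ^ e = valueCount d 1 + ∑ i ∈ Icc 2 (b - 1), valueCount d i * i ^ e := by
  have hmem : ∀ p, d p ∈ insert 0 (insert 1 (Icc 2 (b - 1))) := fun p => by
    have := hd p
    simp only [mem_insert, mem_Icc]
    omega
  rw [sum_comp_eq_sum_valueCount_mul hmem (· ^ e), sum_insert (by simp), sum_insert (by simp)]
  simp [he]

def countTuple (b : ℕ) (d : α → ℕ) : (i : ℕ) → i ∈ Icc 2 (b - 1) → ℕ := fun i _ => valueCount d i

lemma countTuple_eq_iff {d : α → ℕ} {f : (i : ℕ) → i ∈ Icc 2 (b - 1) → ℕ} :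
    countTuple b d = f ↔ ∀ i ∈ Icc 2 (b - 1), valueCount d i = extendTuple b f i := by
  constructor
  · rintro rfl i hi
    simp [extendTuple, countTuple, hi]
  · intro h
    funext i hi
    simp [countTuple, h i hi, extendTuple, hi]

variable [DecidableEq α]

def funsWithCounts (n : ℕ) (s : Finset α) (c : ℕ → ℕ) : Finset (α → ℕ) :=
  {d ∈ Fintype.piFinset fun _ => range (n + 1) |
    (∀ p ∉ s, d p = 0) ∧ ∀ i ∈ Icc 1 n, valueCount d i = c i}

lemma mem_funsWithCounts {n : ℕ} {s : Finset α} {c : ℕ → ℕ} {d : α → ℕ} :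
    d ∈ funsWithCounts n s c ↔
      (∀ p, d p ≤ n) ∧ (∀ p ∉ s, d p = 0) ∧ ∀ i ∈ Icc 1 n, valueCount d i = c i := by
  simp [funsWithCounts]

lemma card_funsWithCounts_fiber {n : ℕ} {s T : Finset α} {c : ℕ → ℕ} (hTs : T ⊆ s)
    (hT : #T = c (n + 1)) :
    #{d ∈ funsWithCounts (n + 1) s c | ({p | d p = n + 1} : Finset α) = T} =
      #(funsWithCounts n (s \ T) c) := by
  apply card_nbij' (fun d p => if p ∈ T then 0 else d p) (fun d p => if p ∈ T then n + 1 else d p)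
  · intro d hd
    simp only [mem_coe, mem_filter, mem_funsWithCounts, valueCount, Finset.ext_iff] at hd ⊢
    obtain ⟨⟨hle, hs, hc⟩, hTd⟩ := hd
    refine ⟨fun p => by grind, fun p hp => by grind, fun i hi => ?_⟩
    rw [← hc i (by grind)]
    exact congrArg card (filter_congr fun p _ => by grind)
  · intro d hd
    simp only [mem_coe, mem_filter, mem_funsWithCounts, valueCount, Finset.ext_iff] at hd ⊢
    obtain ⟨hle, hs, hc⟩ := hd
    refine ⟨⟨fun p => by grind, fun p hp => by grind, fun i hi => ?_⟩, fun p => by grind⟩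
    rcases (mem_Icc.1 hi).2.lt_or_eq with hin | rfl
    · rw [← hc i (by grind)]
      exact congrArg card (filter_congr fun p _ => by grind)
    · rw [← hT]
      congr 1
      ext p
      simp only [mem_filter_univ]
      grind
  · intro d hd
    simp only [mem_coe, mem_filter, mem_funsWithCounts, valueCount, Finset.ext_iff] at hd
    funext p
    grind
  · intro d hd
    simp only [mem_coe, mem_funsWithCounts] at hd
    funext p
    grind

lemma card_funsWithCounts (n : ℕ) (s : Finset α) (c : ℕ → ℕ) :
    #(funsWithCounts n s c) = ∏ i ∈ Icc 1 n, (#s - ∑ x ∈ Icc (i + 1) n, c x).choose (c i) := by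
  induction n generalizing s with
  | zero =>
    rw [Icc_eq_empty (by omega), prod_empty, card_eq_one]
    exact ⟨0, by ext d; simp +contextual [mem_funsWithCounts, funext_iff]⟩
  | succ n ih =>
    have hmaps : Set.MapsTo (fun d : α → ℕ => ({p | d p = n + 1} : Finset α))
        (funsWithCounts (n + 1) s c) (s.powersetCard (c (n + 1))) := by
      intro d hd
      rw [mem_coe, mem_funsWithCounts] at hd
      rw [mem_coe, mem_powersetCard]
      refine ⟨fun p hp => ?_, hd.2.2 (n + 1) (by simp)⟩
      by_contra hps
      simp [hd.2.1 p hps] at hp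
    rw [card_eq_sum_card_fiberwise hmaps, sum_congr rfl fun T hT => card_funsWithCounts_fiber
      (mem_powersetCard.1 hT).1 (mem_powersetCard.1 hT).2]
    have hfiber (T) (hT : T ∈ s.powersetCard (c (n + 1))) : #(funsWithCounts n (s \ T) c) =
        ∏ i ∈ Icc 1 n, (#s - c (n + 1) - ∑ x ∈ Icc (i + 1) n, c x).choose (c i) := by
      rw [ih, card_sdiff_of_subset (mem_powersetCard.1 hT).1, (mem_powersetCard.1 hT).2]
    rw [sum_congr rfl hfiber, sum_const, card_powersetCard, smul_eq_mul,
      prod_Icc_succ_top (by omega), Icc_eq_empty (Nat.not_succ_le_self _), sum_empty,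
      Nat.sub_zero, mul_comm]
    congr 1
    refine prod_congr rfl fun i hi => ?_
    rw [sum_Icc_succ_top (by grind), Nat.sub_sub, add_comm (c (n + 1))]

lemma countTuple_mem (he : e ≠ 0) {d : α → ℕ}
    (hd : d ∈ {d ∈ Fintype.piFinset fun _ : α => range b | ∑ p, d p ^ e = m}) :
    countTuple b d ∈ {f ∈ (Icc 2 (b - 1)).pi fun _ => range (m + 1) |
        ∑ i ∈ Icc 2 (b - 1), extendTuple b f i * i ^ e ≤ m} := by
  simp only [mem_filter, Fintype.mem_piFinset, mem_range, mem_pi] at hd ⊢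
  have hsplit := sum_pow_eq_valueCount_one_add he hd.1
  have hext : ∀ i ∈ Icc 2 (b - 1), extendTuple b (countTuple b d) i = valueCount d i :=
    fun i hi => (countTuple_eq_iff.1 rfl i hi).symm
  rw [sum_congr rfl fun i hi => by rw [hext i hi]]
  refine ⟨fun i hi => ?_, by omega⟩
  calc valueCount d i ≤ valueCount d i * i ^ e := Nat.le_mul_of_pos_right _ (pow_pos (by grind) e)
    _ ≤ ∑ j ∈ Icc 2 (b - 1), valueCount d j * j ^ e :=
        single_le_sum (f := fun j => valueCount d j * j ^ e) (fun _ _ => Nat.zero_le _) hi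
    _ < m + 1 := by omega

lemma filter_countTuple_eq_funsWithCounts (hb : 1 < b) (he : e ≠ 0) {f : (i : ℕ) → i ∈ Icc 2 (b - 1) → ℕ}
    (hf : ∑ i ∈ Icc 2 (b - 1), extendTuple b f i * i ^ e ≤ m) :
    {d ∈ {d ∈ Fintype.piFinset fun _ : α => range b | ∑ p, d p ^ e = m} | countTuple b d = f} =
      funsWithCounts (b - 1) univ (Function.update (extendTuple b f) 1
        (m - ∑ i ∈ Icc 2 (b - 1), extendTuple b f i * i ^ e)) := by
  ext d
  simp only [mem_filter, Fintype.mem_piFinset, mem_range, mem_funsWithCounts, mem_univ,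
    not_true_eq_false, IsEmpty.forall_iff, implies_true, true_and, countTuple_eq_iff,
    ← insert_Icc_add_one_left_eq_Icc (show 1 ≤ b - 1 by omega), forall_mem_insert,
    Function.update_self]
  set s₁ := ∑ i ∈ Icc 2 (b - 1), extendTuple b f i * i ^ e
  have hupd : ∀ i ∈ Icc 2 (b - 1), Function.update (extendTuple b f) 1 (m - s₁) i =
      extendTuple b f i := fun i hi => Function.update_of_ne (by grind) _ _
  have hsplit (hlt : ∀ p, d p < b) (hc : ∀ i ∈ Icc 2 (b - 1), valueCount d i = extendTuple b f i) :
      ∑ p, d p ^ e = valueCount d 1 + s₁ := by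
    rw [sum_pow_eq_valueCount_one_add he hlt, sum_congr rfl fun i hi => by rw [hc i hi]]
  constructor
  · rintro ⟨⟨hlt, hsum⟩, hc⟩
    have := hsplit hlt hc
    exact ⟨fun p => Nat.le_sub_one_of_lt (hlt p), by omega,
      fun i hi => (hc i hi).trans (hupd i hi).symm⟩
  · rintro ⟨hle, h1, hc⟩
    have hlt : ∀ p, d p < b := fun p => by have := hle p; omega
    have hc' : ∀ i ∈ Icc 2 (b - 1), valueCount d i = extendTuple b f i :=
      fun i hi => (hc i hi).trans (hupd i hi)
    have := hsplit hlt hc'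
    exact ⟨⟨hlt, by omega⟩, hc'⟩

end ValueCount

lemma prod_choose_update_one {n : ℕ} (hn : 1 ≤ n) (g : ℕ → ℕ) (a k : ℕ) :
    ∏ i ∈ Icc 1 n, (k - ∑ x ∈ Icc (i + 1) n, Function.update g 1 a x).choose
        (Function.update g 1 a i) =
      (∏ i ∈ Icc 2 n, (k - ∑ x ∈ Icc (i + 1) n, g x).choose (g i)) *
        (k - ∑ x ∈ Icc 2 n, g x).choose a := by
  have hsum (j : ℕ) (hj : 2 ≤ j) :
      ∑ x ∈ Icc j n, Function.update g 1 a x = ∑ x ∈ Icc j n, g x :=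
    sum_congr rfl fun x hx => Function.update_of_ne (by grind) _ _
  rw [← insert_Icc_add_one_left_eq_Icc hn, prod_insert (by simp), mul_comm, Function.update_self,
    hsum 2 le_rfl]
  congr 1
  exact prod_congr rfl fun i hi => by
    rw [hsum (i + 1) (by grind), Function.update_of_ne (by grind)]

theorem stmt_6_general (b e k m : ℕ) (hb : 2 ≤ b) (he : 2 ≤ e) :
    ((Finset.range (b ^ k)).filter (fun x => S e b x = m)).card =
      ∑ f ∈ ((Finset.Icc 2 (b - 1)).pi fun _ => Finset.range (m + 1)).filter
          (fun f => ∑ i ∈ Finset.Icc 2 (b - 1), extendTuple b f i * i ^ e ≤ m),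
        (∏ i ∈ Finset.Icc 2 (b - 1),
            Nat.choose (k - ∑ x ∈ Finset.Icc (i + 1) (b - 1), extendTuple b f x)
              (extendTuple b f i)) *
          Nat.choose (k - ∑ x ∈ Finset.Icc 2 (b - 1), extendTuple b f x)
            (m - ∑ x ∈ Finset.Icc 2 (b - 1), extendTuple b f x * x ^ e) := by
  have he' : e ≠ 0 := by omega
  rw [card_filter_S_eq hb he', card_eq_sum_card_fiberwise fun d hd => countTuple_mem he' hd]
  refine sum_congr rfl fun f hf => ?_
  rw [filter_countTuple_eq_funsWithCounts hb he' (mem_filter.1 hf).2, card_funsWithCounts, card_univ,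
    Fintype.card_fin, prod_choose_update_one (by omega)]

theorem stmt_6 (b e k m : ℕ) (hb : 2 ≤ b) (he : 2 ≤ e) (hk : 1 ≤ k) (hm : 1 ≤ m) :
    ((Finset.range (b ^ k)).filter (fun x => S e b x = m)).card =
      ∑ f ∈ ((Finset.Icc 2 (b - 1)).pi fun _ => Finset.range (m + 1)).filter
          (fun f => ∑ i ∈ Finset.Icc 2 (b - 1), extendTuple b f i * i ^ e ≤ m),
        (∏ i ∈ Finset.Icc 2 (b - 1),
            Nat.choose (k - ∑ x ∈ Finset.Icc (i + 1) (b - 1), extendTuple b f x)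
              (extendTuple b f i)) *
          Nat.choose (k - ∑ x ∈ Finset.Icc 2 (b - 1), extendTuple b f x)
            (m - ∑ x ∈ Finset.Icc 2 (b - 1), extendTuple b f x * x ^ e) :=
  stmt_6_general b e k m hb he
end

section
/- Fix integers b ≥ 2 and e ≥ 2. For every integer h ≥ 0 there exists a positive integer n that is an e-power b-happy number of height exactly h, i.e., S_{e,b}^h(n) = 1 and S_{e,b}^j(n) ≠ 1 for every integer j with 0 ≤ j < h. -/
theorem stmt_7 (b e : ℕ) (hb : 2 ≤ b) (he : 2 ≤ e) (h : ℕ) :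
    ∃ n : ℕ, 0 < n ∧ (S e b)^[h] n = 1 ∧ ∀ j < h, (S e b)^[j] n ≠ 1 := by
  induction h with
  | zero => exact ⟨1, one_pos, rfl, fun j hj => absurd hj (Nat.not_lt_zero j)⟩
  | succ h ih =>
    obtain ⟨n, hn, h1, h2⟩ := ih
    set L : List ℕ := 0 :: List.replicate n 1 with hL
    set m : ℕ := Nat.ofDigits b L with hm
    have hdig : Nat.digits b m = L := by
      apply Nat.digits_ofDigits b (by omega) L
      · intro l hl
        rw [hL] at hl
        rcases List.mem_cons.1 hl with hl | hl
        · omega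
        · rw [List.eq_of_mem_replicate hl]; omega
      · intro _
        have : L.getLast? = some 1 := by
          rw [hL]
          rcases Nat.exists_eq_add_of_lt hn with ⟨k, hk⟩
          subst hk
          rw [List.replicate_succ']
          show ((0 :: List.replicate _ 1) ++ [1]).getLast? = some 1
          exact List.getLast?_concat
        intro hlast
        rw [List.getLast?_eq_getLast (l := L) (by simp [hL]), hlast] at this
        simp at this
    have hSm : S e b m = n := by
      rw [S, hdig, hL]
      simp [List.map_replicate, one_pow]
      omega
    have hm2 : 2 ≤ m := by
      have : m = b * Nat.ofDigits b (List.replicate n 1) := by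
        simp [hm, hL, Nat.ofDigits_cons]
      have hpos : 0 < Nat.ofDigits b (List.replicate n 1) := by
        rcases Nat.exists_eq_add_of_lt hn with ⟨k, hk⟩
        subst hk
        rw [List.replicate_succ, Nat.ofDigits_cons]
        positivity
      calc 2 ≤ b * 1 := by omega
      _ ≤ b * Nat.ofDigits b (List.replicate n 1) := Nat.mul_le_mul_left b hpos
      _ = m := this.symm
    refine ⟨m, by omega, ?_, ?_⟩
    · rw [Function.iterate_succ_apply, hSm, h1]
    · intro j hj
      cases j with
      | zero => simpa using (by omega : m ≠ 1)
      | succ j =>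
        rw [Function.iterate_succ_apply, hSm]
        exact h2 j (by omega)
end

section
/- Fix integers b ≥ 2 and e ≥ 2. For every integer h ≥ 1, the set of positive integers n that are e-power b-happy of height exactly h (i.e., S_{e,b}^h(n) = 1 and S_{e,b}^j(n) ≠ 1 for all 0 ≤ j < h) is infinite. -/
lemma S_mul_base (e b : ℕ) (hb : 2 ≤ b) (he : 1 ≤ e) (n : ℕ) :
    S e b (b * n) = S e b n := by
  rcases Nat.eq_zero_or_pos n with rfl | hn
  · simp
  · have h1 : Nat.digits b (b * n) = (b * n) % b :: Nat.digits b ((b * n) / b) :=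
      Nat.digits_def' (by omega) (by positivity)
    rw [S, h1, Nat.mul_mod_right, Nat.mul_div_cancel_left _ (by omega)]
    simp [S, zero_pow (by omega : e ≠ 0)]

lemma S_pow_mul (e b : ℕ) (hb : 2 ≤ b) (he : 1 ≤ e) (k n : ℕ) :
    S e b (b ^ k * n) = S e b n := by
  induction k with
  | zero => simp
  | succ k ih => rw [pow_succ, mul_comm (b ^ k) b, mul_assoc, S_mul_base e b hb he, ih]

def repunit (b m : ℕ) : ℕ := ∑ i ∈ Finset.range m, b ^ i

lemma repunit_pos (b m : ℕ) (hb : 2 ≤ b) (hm : 0 < m) : 0 < repunit b m := by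
  have : (1 : ℕ) = b ^ 0 := by simp
  calc (0:ℕ) < b ^ 0 := by positivity
    _ ≤ repunit b m := Finset.single_le_sum (f := fun i => b ^ i)
        (fun i _ => Nat.zero_le _) (Finset.mem_range.mpr hm)

lemma S_repunit (e b : ℕ) (hb : 2 ≤ b) (he : 1 ≤ e) (m : ℕ) :
    S e b (repunit b m) = m := by
  induction m with
  | zero => simp [repunit, S]
  | succ m ih =>
    have h : repunit b (m + 1) = b * repunit b m + 1 := by
      rw [repunit, geom_sum_succ]; rfl
    rw [h]
    have h1 : Nat.digits b (b * repunit b m + 1) = 1 :: Nat.digits b (repunit b m) := by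
      rw [Nat.digits_def' (by omega) (by omega)]
      congr 1
      · rw [Nat.mul_add_mod, Nat.mod_eq_of_lt (by omega)]
      · rw [Nat.mul_add_div (by omega), Nat.div_eq_of_lt (by omega), Nat.add_zero]
    rw [S, h1]
    simp only [List.map_cons, List.sum_cons, one_pow]
    rw [show ((Nat.digits b (repunit b m)).map (· ^ e)).sum = S e b (repunit b m) from rfl, ih]
    omega

lemma exists_height (b e : ℕ) (hb : 2 ≤ b) (he : 2 ≤ e) (h : ℕ) :
    ∃ m, 0 < m ∧ (S e b)^[h] m = 1 ∧ ∀ j < h, (S e b)^[j] m ≠ 1 := by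
  induction h with
  | zero => exact ⟨1, one_pos, rfl, by omega⟩
  | succ h ih =>
    obtain ⟨m, hm0, hm1, hm2⟩ := ih
    have hrp := repunit_pos b m hb hm0
    have hS : S e b (b * repunit b m) = m := by
      rw [S_mul_base e b hb (by omega), S_repunit e b hb (by omega)]
    refine ⟨b * repunit b m, by positivity, ?_, ?_⟩
    · rw [Function.iterate_succ_apply, hS, hm1]
    · intro j hj
      match j with
      | 0 =>
        simp only [Function.iterate_zero, id]
        nlinarith
      | j + 1 =>
        rw [Function.iterate_succ_apply, hS]
        exact hm2 j (by omega)

theorem stmt_8 (b e h : ℕ) (hb : 2 ≤ b) (he : 2 ≤ e) (hh : 1 ≤ h) :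
    {n : ℕ | 0 < n ∧ (S e b)^[h] n = 1 ∧ ∀ j < h, (S e b)^[j] n ≠ 1}.Infinite := by
  obtain ⟨h', rfl⟩ : ∃ h', h = h' + 1 := ⟨h - 1, by omega⟩
  obtain ⟨m, hm0, hm1, hm2⟩ := exists_height b e hb he h'
  have hrp := repunit_pos b m hb hm0
  refine Set.infinite_of_injective_forall_mem
    (f := fun t : ℕ => b ^ (t + 1) * repunit b m) ?_ ?_
  · have hsm : StrictMono fun t : ℕ => b ^ (t + 1) * repunit b m := by
      intro s t hst
      exact (Nat.mul_lt_mul_right hrp).mpr (Nat.pow_lt_pow_right (by omega) (by omega))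
    exact hsm.injective
  · intro t
    have hS : S e b (b ^ (t + 1) * repunit b m) = m := by
      rw [S_pow_mul e b hb (by omega), S_repunit e b hb (by omega)]
    refine ⟨by positivity, ?_, ?_⟩
    · rw [Function.iterate_succ_apply, hS, hm1]
    · intro j hj
      match j with
      | 0 =>
        simp only [Function.iterate_zero, id]
        have : b ^ (t + 1) ≥ 2 := by
          calc (2:ℕ) ≤ b := hb
            _ = b ^ 1 := (pow_one b).symm
            _ ≤ b ^ (t + 1) := Nat.pow_le_pow_right (by omega) (by omega)
        nlinarith
      | j + 1 =>
        rw [Function.iterate_succ_apply, hS]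
        exact hm2 j (by omega)
end

section
/- For all integers t ≥ 1 and ℓ ≥ 1, let b = (ℓ^2 + 1)t + ℓ and X = t·b + (ℓt + 1) (so X has base-b digits x_1 = t and x_0 = ℓt + 1, which satisfy 0 ≤ t, ℓt + 1 < b). Then S_{2,b}(X) = X, i.e., t^2 + (ℓt + 1)^2 = t·b + (ℓt + 1); consequently X > 1 is a fixed point of S_{2,b} and is not a 2-power b-happy number: S_{2,b}^m(X) ≠ 1 for every integer m ≥ 0. -/
theorem stmt_15 (t l : ℕ) (ht : 1 ≤ t) (hl : 1 ≤ l) :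
    t < (l ^ 2 + 1) * t + l ∧ l * t + 1 < (l ^ 2 + 1) * t + l ∧
    S 2 ((l ^ 2 + 1) * t + l) (t * ((l ^ 2 + 1) * t + l) + (l * t + 1)) =
      t * ((l ^ 2 + 1) * t + l) + (l * t + 1) ∧
    t ^ 2 + (l * t + 1) ^ 2 = t * ((l ^ 2 + 1) * t + l) + (l * t + 1) ∧
    1 < t * ((l ^ 2 + 1) * t + l) + (l * t + 1) ∧
    ∀ m : ℕ,
      (S 2 ((l ^ 2 + 1) * t + l))^[m] (t * ((l ^ 2 + 1) * t + l) + (l * t + 1)) ≠ 1 := by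
  set b := (l ^ 2 + 1) * t + l with hb
  set X := t * b + (l * t + 1) with hX
  have h1 : t < b := by rw [hb]; nlinarith
  have h2 : l * t + 1 < b := by
    have : l ≤ l ^ 2 := Nat.le_self_pow two_ne_zero l
    rw [hb]; nlinarith
  have hb2 : 1 < b := by nlinarith
  have hXpos : 0 < X := by positivity
  have hmod : X % b = l * t + 1 := by
    rw [hX, mul_comm t b, Nat.mul_add_mod]
    exact Nat.mod_eq_of_lt h2
  have hdiv : X / b = t := by
    rw [hX, mul_comm t b, Nat.mul_add_div (by omega), Nat.div_eq_of_lt h2, add_zero]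
  have hdig : Nat.digits b X = [l * t + 1, t] := by
    rw [Nat.digits_def' hb2 hXpos, hmod, hdiv,
      Nat.digits_def' hb2 (by omega), Nat.mod_eq_of_lt h1,
      Nat.div_eq_of_lt h1, Nat.digits_zero]
  have heq : t ^ 2 + (l * t + 1) ^ 2 = X := by rw [hX, hb]; ring
  have hS : S 2 b X = X := by
    rw [S, hdig]; simp; omega
  refine ⟨h1, h2, hS, heq, by rw [hX, hb]; nlinarith, fun m => ?_⟩
  rw [Function.iterate_fixed hS m]
  rw [hX, hb]; nlinarith
end

section
/- For every integer t ≥ 0, let b = 5t + 3, X = t·b + (3t + 2), and Y = (2t + 1)·b + (t + 1) (so X has base-b digits t and 3t + 2, and Y has base-b digits 2t + 1 and t + 1, all less than b). Then S_{2,b}(X) = Y, S_{2,b}(Y) = X, and Y = 2X; consequently X and Y form a 2-cycle of S_{2,b} and neither X nor Y is a 2-power b-happy number: S_{2,b}^m(X) ≠ 1 and S_{2,b}^m(Y) ≠ 1 for every integer m ≥ 0. -/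
lemma S_two_digits (b a c : ℕ) (hb : 2 ≤ b) (ha : a < b) (hc : c < b)
    (hpos : 0 < c) : S 2 b (a * b + c) = a ^ 2 + c ^ 2 := by
  have h1 : (1:ℕ) < b := hb
  have hmod : (a * b + c) % b = c := by
    simp [Nat.add_mod, Nat.mul_mod_left, Nat.mod_eq_of_lt hc]
  have hdiv : (a * b + c) / b = a := by
    have h : a * b + c = c + b * a := by ring
    rw [h, Nat.add_mul_div_left _ _ (by omega : 0 < b), Nat.div_eq_of_lt hc, zero_add]
  have hd : Nat.digits b (a * b + c) = c :: Nat.digits b a := by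
    rw [Nat.digits_def' h1 (by omega), hmod, hdiv]
  rcases Nat.eq_zero_or_pos a with rfl | hapos
  · simp [S, hd, Nat.digits_def' h1 hpos, Nat.mod_eq_of_lt hc, Nat.div_eq_of_lt hc]
  · have hda : Nat.digits b a = [a] := by
      rw [Nat.digits_def' h1 hapos, Nat.mod_eq_of_lt ha, Nat.div_eq_of_lt ha,
        Nat.digits_zero]
    simp [S, hd, hda]; ring

theorem stmt_16 (t : ℕ) :
    S 2 (5 * t + 3) (t * (5 * t + 3) + (3 * t + 2)) = (2 * t + 1) * (5 * t + 3) + (t + 1) ∧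
    S 2 (5 * t + 3) ((2 * t + 1) * (5 * t + 3) + (t + 1)) = t * (5 * t + 3) + (3 * t + 2) ∧
    (2 * t + 1) * (5 * t + 3) + (t + 1) = 2 * (t * (5 * t + 3) + (3 * t + 2)) ∧
    ∀ m : ℕ,
      (S 2 (5 * t + 3))^[m] (t * (5 * t + 3) + (3 * t + 2)) ≠ 1 ∧
      (S 2 (5 * t + 3))^[m] ((2 * t + 1) * (5 * t + 3) + (t + 1)) ≠ 1 := by
  set b := 5 * t + 3 with hb
  set X := t * b + (3 * t + 2) with hX
  set Y := (2 * t + 1) * b + (t + 1) with hY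
  have h1 : S 2 b X = Y := by
    rw [hX, S_two_digits b t (3 * t + 2) (by omega) (by omega) (by omega) (by omega)]
    rw [hY, hb]; ring
  have h2 : S 2 b Y = X := by
    rw [hY, S_two_digits b (2 * t + 1) (t + 1) (by omega) (by omega) (by omega) (by omega)]
    rw [hX, hb]; ring
  have h3 : Y = 2 * X := by rw [hX, hY, hb]; ring
  refine ⟨h1, h2, h3, ?_⟩
  have key : ∀ m : ℕ, ((S 2 b)^[m] X = X ∨ (S 2 b)^[m] X = Y) ∧
      ((S 2 b)^[m] Y = X ∨ (S 2 b)^[m] Y = Y) := by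
    intro m
    induction m with
    | zero => simp
    | succ n ih =>
      rw [Function.iterate_succ_apply', Function.iterate_succ_apply']
      rcases ih with ⟨hx, hy⟩
      constructor
      · rcases hx with h | h <;> rw [h] <;> simp [h1, h2]
      · rcases hy with h | h <;> rw [h] <;> simp [h1, h2]
  intro m
  have hXne : X ≠ 1 := by omega
  have hYne : Y ≠ 1 := by omega
  rcases key m with ⟨hx, hy⟩
  constructor
  · rcases hx with h | h <;> rw [h] <;> assumption
  · rcases hy with h | h <;> rw [h] <;> assumption
end
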